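/- arXiv:1809.10964 — 5 statements merged into one kernel-verified Lean document; each statement's English description precedes it below -/
import Mathlib

section
/- Let I be the ideal of k[x_1,...,x_n] generated by the set A = {x_1^{d_1} - x_2 x_n^{d_1-1}, x_2^{d_2} - x_3 x_n^{d_2-1}, ..., x_{n-2}^{d_{n-2}} - x_{n-1} x_n^{d_{n-2}-1}, x_{n-1}^{d_{n-1}}}. Then A is a Gröbner basis of I with respect to the degree reverse lexicographic order with x_n ≺ ··· ≺ x_1, and the leading ideal of I is ⟨x_1^{d_1}, ..., x_{n-1}^{d_{n-1}}⟩. -/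
/-!
Rewriting `x_i^{d_i} ↦ x_{i+1} x_n^{d_i - 1}` for `i = 1, …, n - 2` in this order, each variable
passing a carry to the next one, and then sending the monomial to `0` if the exponent of
`x_{n-1}` is still `≥ d_{n-1}`, gives a normal form of monomials. Since the variables are
processed in a fixed order, a monomial multiple of a generator changes the input only at a
place where the carry absorbs the change, so the linear extension of the normal form vanishes
on `I`. Each rule lowers degrevlex, so the normal form of `x^α` involves only `x^α` and smaller
monomials, and it fixes the standard monomials (those divisible by no `x_i^{d_i}`). Comparing
coefficients of the leading monomial of a nonzero `f ∈ I` in `f` and in its normal form `0`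
shows that this leading monomial is not standard; conversely `x_i^{d_i}` is the leading monomial
of the `i`-th generator.
-/

open MvPolynomial

/-- Strict degree reverse lexicographic order (with `x_n` the smallest variable, i.e.
the variable of highest index smallest): `α ≺ β` iff `deg α < deg β`, or the total
degrees agree and at the largest index where they differ, `α` has the larger entry. -/
def DegRevLexLT {n : ℕ} (α β : Fin n →₀ ℕ) : Prop :=
  (α.sum fun _ v => v) < (β.sum fun _ v => v) ∨
    ((α.sum fun _ v => v) = (β.sum fun _ v => v) ∧
      ∃ i : Fin n, β i < α i ∧ ∀ j : Fin n, i < j → α j = β j)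

/-- `e` is the exponent of the leading term of `f` w.r.t. degrevlex. -/
def IsLeadExp {n : ℕ} {k : Type*} [CommRing k] (f : MvPolynomial (Fin n) k)
    (e : Fin n →₀ ℕ) : Prop :=
  e ∈ f.support ∧ ∀ e' ∈ f.support, e' ≠ e → DegRevLexLT e' e

/-- The leading term ideal of `I` w.r.t. degrevlex: the ideal generated by the leading
monomials of the nonzero elements of `I`. -/
noncomputable def ltIdeal {n : ℕ} {k : Type*} [Field k] (I : Ideal (MvPolynomial (Fin n) k)) :
    Ideal (MvPolynomial (Fin n) k) :=
  Ideal.span {m | ∃ f ∈ I, f ≠ 0 ∧ ∃ e, IsLeadExp f e ∧ m = monomial e (1 : k)}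

/-- `A` is a Gröbner basis of `I` w.r.t. degrevlex: `A ⊆ I` and the leading terms of the
elements of `A` generate the leading term ideal of `I`. -/
def IsGroebnerBasis {n : ℕ} {k : Type*} [Field k] (A : Set (MvPolynomial (Fin n) k))
    (I : Ideal (MvPolynomial (Fin n) k)) : Prop :=
  A ⊆ (I : Set (MvPolynomial (Fin n) k)) ∧
    ltIdeal I = Ideal.span {m | ∃ f ∈ A, ∃ e, IsLeadExp f e ∧ m = monomial e (1 : k)}

lemma degRevLexLT_iff {n : ℕ} {α β : Fin n →₀ ℕ} :
    DegRevLexLT α β ↔ α.degree < β.degree ∨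
      (α.degree = β.degree ∧ ∃ i, β i < α i ∧ ∀ j, i < j → α j = β j) :=
  Iff.rfl

namespace DegRevLexLT

variable {n : ℕ} {α β γ : Fin n →₀ ℕ}

lemma degree_le (h : DegRevLexLT α β) : α.degree ≤ β.degree := by
  rcases h with h | ⟨h, -⟩
  exacts [h.le, h.le]

lemma irrefl (α : Fin n →₀ ℕ) : ¬ DegRevLexLT α α := by
  rintro (h | ⟨-, i, h, -⟩) <;> exact lt_irrefl _ h

lemma trans (h₁ : DegRevLexLT α β) (h₂ : DegRevLexLT β γ) : DegRevLexLT α γ := by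
  rcases h₁ with h₁ | ⟨e₁, i, hi, hi'⟩
  · exact .inl (h₁.trans_le h₂.degree_le)
  rcases h₂ with h₂ | ⟨e₂, j, hj, hj'⟩
  · exact .inl (e₁.trans_lt h₂)
  refine .inr ⟨e₁.trans e₂, ?_⟩
  rcases lt_trichotomy i j with hij | rfl | hij
  · exact ⟨j, (hi' j hij).symm ▸ hj, fun l hl => (hi' l (hij.trans hl)).trans (hj' l hl)⟩
  · exact ⟨i, hj.trans hi, fun l hl => (hi' l hl).trans (hj' l hl)⟩
  · exact ⟨i, hj' i hij ▸ hi, fun l hl => (hi' l hl).trans (hj' l (hij.trans hl))⟩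

lemma asymm (h : DegRevLexLT α β) : ¬ DegRevLexLT β α := fun h' => irrefl α (h.trans h')

lemma add_left (h : DegRevLexLT α β) (γ : Fin n →₀ ℕ) : DegRevLexLT (γ + α) (γ + β) := by
  simp only [degRevLexLT_iff, map_add, Finsupp.add_apply, add_lt_add_iff_left,
    add_right_inj] at h ⊢
  exact h

lemma nsmul (h : DegRevLexLT α β) {q : ℕ} (hq : q ≠ 0) : DegRevLexLT (q • α) (q • β) := by
  simp only [degRevLexLT_iff, map_nsmul, Finsupp.smul_apply, smul_eq_mul,
    Nat.mul_lt_mul_left (Nat.pos_of_ne_zero hq),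
    Nat.mul_left_cancel_iff (Nat.pos_of_ne_zero hq)] at h ⊢
  exact h

end DegRevLexLT

section LeadingExponent

variable {n : ℕ} {R : Type*} [CommRing R]

lemma IsLeadExp.ne_zero {f : MvPolynomial (Fin n) R} {e : Fin n →₀ ℕ} (h : IsLeadExp f e) :
    f ≠ 0 := by
  rintro rfl
  simpa using h.1

lemma IsLeadExp.unique {f : MvPolynomial (Fin n) R} {e e' : Fin n →₀ ℕ} (h : IsLeadExp f e)
    (h' : IsLeadExp f e') : e = e' := by
  by_contra hne
  exact (h.2 e' h'.1 (Ne.symm hne)).asymm (h'.2 e h.1 hne)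

lemma isLeadExp_monomial {e : Fin n →₀ ℕ} {c : R} (hc : c ≠ 0) :
    IsLeadExp (monomial e c) e := by
  refine ⟨by simp [hc], fun e' he' hne => absurd ?_ hne⟩
  simpa [MvPolynomial.support_monomial, hc, eq_comm] using he'

lemma isLeadExp_monomial_sub_monomial [Nontrivial R] {a b : Fin n →₀ ℕ}
    (h : DegRevLexLT b a) :
    IsLeadExp (monomial a 1 - monomial b 1 : MvPolynomial (Fin n) R) a := by
  have hab : a ≠ b := fun hab => DegRevLexLT.irrefl a (hab ▸ h)
  refine ⟨by simp [MvPolynomial.coeff_monomial, Ne.symm hab], fun e he hne => ?_⟩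
  obtain rfl : e = b := by
    by_contra heb
    simp [MvPolynomial.coeff_monomial, Ne.symm hne, Ne.symm heb] at he
  exact h

lemma coeff_constr_of_isLeadExp (N : (Fin n →₀ ℕ) → MvPolynomial (Fin n) R)
    (hN : ∀ α, ∀ β ∈ (N α).support, β = α ∨ DegRevLexLT β α)
    {f : MvPolynomial (Fin n) R} {e : Fin n →₀ ℕ} (hf : IsLeadExp f e) :
    coeff e ((basisMonomials (Fin n) R).constr R N f) = coeff e f * coeff e (N e) := by
  have constr_monomial (α : Fin n →₀ ℕ) (c : R) :
      (basisMonomials (Fin n) R).constr R N (monomial α c) = c • N α := by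
    rw [show monomial α c = c • monomial α 1 by rw [smul_monomial, smul_eq_mul, mul_one],
      map_smul, show monomial α (1 : R) = basisMonomials (Fin n) R α by rw [coe_basisMonomials],
      Module.Basis.constr_basis]
  conv_lhs => rw [f.as_sum]
  rw [map_sum, coeff_sum, Finset.sum_eq_single_of_mem e hf.1, constr_monomial, coeff_smul,
    smul_eq_mul]
  intro α hα hne
  rw [constr_monomial, coeff_smul,
    notMem_support_iff.mp (show e ∉ (N α).support from fun he => ?_), smul_zero]
  rcases hN α e he with rfl | hlt
  exacts [hne rfl, hlt.asymm (hf.2 α hα hne)]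

lemma span_leadMonomials_le_ltIdeal {k : Type*} [Field k] {A : Set (MvPolynomial (Fin n) k)}
    {I : Ideal (MvPolynomial (Fin n) k)} (hA : A ⊆ I) :
    Ideal.span {m | ∃ f ∈ A, ∃ e, IsLeadExp f e ∧ m = monomial e (1 : k)} ≤ ltIdeal I :=
  Ideal.span_mono fun _ ⟨f, hf, e, he, hm⟩ => ⟨f, hA hf, he.ne_zero, e, he, hm⟩

end LeadingExponent

lemma map_eq_zero_of_mem_ideal_span {σ R M : Type*} [CommRing R] [AddCommGroup M]
    [Module R M] (φ : MvPolynomial σ R →ₗ[R] M) {s : Set (MvPolynomial σ R)}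
    (h : ∀ a ∈ s, ∀ γ, φ (monomial γ 1 * a) = 0) {f : MvPolynomial σ R}
    (hf : f ∈ Ideal.span s) : φ f = 0 := by
  suffices ∀ r, φ (r * f) = 0 by simpa using this 1
  induction hf using Submodule.span_induction with
  | mem a ha =>
    intro r
    induction r using MvPolynomial.induction_on' with
    | monomial γ c =>
      rw [show monomial γ c = c • monomial γ 1 by rw [smul_monomial, smul_eq_mul, mul_one],
        smul_mul_assoc, map_smul, h a ha, smul_zero]
    | add p q hp hq => rw [add_mul, map_add, hp, hq, add_zero]
  | zero => simp
  | add x y _ _ hx hy => intro r; rw [mul_add, map_add, hx, hy, add_zero]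
  | smul c x _ hx => intro r; rw [smul_eq_mul, ← mul_assoc, hx]

section ExponentReduction

variable {n : ℕ} (d : ℕ → ℕ)

-- The exponent of `x_{i+1} x_n^{d_i - 1}`; variables are indexed from `0`, so `x_n` is `n - 1`.
noncomputable def tailExp (i : ℕ) (hi : i < n - 2) : Fin n →₀ ℕ :=
  Finsupp.single ⟨i + 1, by omega⟩ 1 + Finsupp.single ⟨n - 1, by omega⟩ (d i - 1)

lemma tailExp_apply {i : ℕ} (hi : i < n - 2) (j : Fin n) : tailExp d i hi j =
    (if (j : ℕ) = i + 1 then 1 else 0) + if (j : ℕ) = n - 1 then d i - 1 else 0 := by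
  simp only [tailExp, Finsupp.add_apply, Finsupp.single_apply, Fin.ext_iff, eq_comm]

lemma tailExp_lt {i : ℕ} (hi : i < n - 2) (hd : 1 ≤ d i) :
    DegRevLexLT (tailExp d i hi) (Finsupp.single ⟨i, by omega⟩ (d i)) := by
  rw [degRevLexLT_iff]
  refine .inr ⟨by simp only [tailExp, map_add, Finsupp.degree_single]; omega, ?_⟩
  obtain hd1 | hd2 := eq_or_lt_of_le hd
  · refine ⟨⟨i + 1, by omega⟩, ?_, fun j hj => ?_⟩
    · simp only [tailExp_apply, Finsupp.single_apply, Fin.ext_iff]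
      split_ifs <;> omega
    · simp only [tailExp_apply, Finsupp.single_apply, Fin.ext_iff, Fin.lt_def] at hj ⊢
      split_ifs <;> omega
  · refine ⟨⟨n - 1, by omega⟩, ?_, fun j hj => ?_⟩
    · simp only [tailExp_apply, Finsupp.single_apply, Fin.ext_iff]
      split_ifs <;> omega
    · exact absurd j.isLt (by simp only [Fin.lt_def] at hj; omega)

def IsStandard (α : Fin n →₀ ℕ) : Prop := ∀ j : Fin n, (j : ℕ) < n - 1 → α j < d j

-- The rule `x_i^{d_i} ↦ x_{i+1} x_n^{d_i - 1}` applied `β_i / d_i` times at once.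
noncomputable def reduceAt (i : ℕ) (β : Fin n →₀ ℕ) : Fin n →₀ ℕ :=
  if hi : i < n - 2 then
    β - Finsupp.single ⟨i, by omega⟩ (β ⟨i, by omega⟩ / d i * d i) +
      (β ⟨i, by omega⟩ / d i) • tailExp d i hi
  else β

variable {d}

lemma reduceAt_of_isStandard {β : Fin n →₀ ℕ} (hβ : IsStandard d β) (i : ℕ) :
    reduceAt d i β = β := by
  unfold reduceAt
  split_ifs with hi
  · simp [Nat.div_eq_of_lt (hβ ⟨i, by omega⟩ (by simp only; omega))]
  · rfl

lemma reduceAt_le (i : ℕ) (β : Fin n →₀ ℕ) :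
    reduceAt d i β = β ∨ DegRevLexLT (reduceAt d i β) β := by
  unfold reduceAt
  split_ifs with hi
  · set q := β ⟨i, by omega⟩ / d i with hq
    obtain hq0 | hq0 := eq_or_ne q 0
    · simp [hq0]
    have hd : 1 ≤ d i := Nat.pos_of_ne_zero fun h => hq0 (by simp [hq, h])
    have hle : Finsupp.single ⟨i, by omega⟩ (q * d i) ≤ β :=
      Finsupp.single_le_iff.mpr (Nat.div_mul_le_self _ _)
    right
    conv_rhs => rw [← tsub_add_cancel_of_le hle]
    rw [← smul_eq_mul, ← Finsupp.smul_single]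
    exact ((tailExp_lt d hi hd).nsmul hq0).add_left _
  · exact .inl rfl

lemma reduceAt_add {i : ℕ} {δ : Fin n →₀ ℕ} (hδ : ∀ j : Fin n, (j : ℕ) = i → δ j = 0)
    (β : Fin n →₀ ℕ) : reduceAt d i (β + δ) = reduceAt d i β + δ := by
  unfold reduceAt
  split_ifs with hi
  · have hδi := hδ ⟨i, by omega⟩ rfl
    have hle : Finsupp.single ⟨i, by omega⟩ (β ⟨i, by omega⟩ / d i * d i) ≤ β :=
      Finsupp.single_le_iff.mpr (Nat.div_mul_le_self _ _)
    rw [Finsupp.add_apply, hδi, add_zero, ← tsub_add_eq_add_tsub hle, add_right_comm]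
  · rfl

lemma reduceAt_add_single {i : ℕ} (hi : i < n - 2) (hd : 1 ≤ d i) (β : Fin n →₀ ℕ) :
    reduceAt d i (β + Finsupp.single ⟨i, by omega⟩ (d i)) =
      reduceAt d i β + tailExp d i hi := by
  unfold reduceAt
  rw [dif_pos hi, dif_pos hi, Finsupp.add_apply, Finsupp.single_eq_same,
    Nat.add_div_right _ hd, add_one_mul, Finsupp.single_add, add_tsub_add_eq_tsub_right,
    add_smul, one_smul, add_assoc]

variable (d) in
noncomputable def reduceUpTo : ℕ → (Fin n →₀ ℕ) → (Fin n →₀ ℕ)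
  | 0, β => β
  | m + 1, β => reduceAt d m (reduceUpTo m β)

lemma reduceUpTo_of_isStandard {β : Fin n →₀ ℕ} (hβ : IsStandard d β) (m : ℕ) :
    reduceUpTo d m β = β := by
  induction m with
  | zero => rfl
  | succ m ih => rw [reduceUpTo, ih, reduceAt_of_isStandard hβ]

lemma reduceUpTo_le (m : ℕ) (β : Fin n →₀ ℕ) :
    reduceUpTo d m β = β ∨ DegRevLexLT (reduceUpTo d m β) β := by
  induction m with
  | zero => exact .inl rfl
  | succ m ih =>
    rw [reduceUpTo]
    rcases ih with ih | ih <;> rcases reduceAt_le (d := d) m (reduceUpTo d m β) with h | h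
    · exact .inl (h.trans ih)
    · rw [ih] at h ⊢
      exact .inr h
    · rw [h]
      exact .inr ih
    · exact .inr (h.trans ih)

lemma reduceUpTo_add {m : ℕ} {δ : Fin n →₀ ℕ} (hδ : ∀ j : Fin n, (j : ℕ) < m → δ j = 0)
    (β : Fin n →₀ ℕ) : reduceUpTo d m (β + δ) = reduceUpTo d m β + δ := by
  induction m with
  | zero => rfl
  | succ m ih =>
    rw [reduceUpTo, ih fun j hj => hδ j (by omega), reduceAt_add fun j hj => hδ j (by omega),
      reduceUpTo]

lemma reduceUpTo_add_single {i m : ℕ} (hi : i < n - 2) (hd : 1 ≤ d i) (him : i < m)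
    (β : Fin n →₀ ℕ) :
    reduceUpTo d m (β + Finsupp.single ⟨i, by omega⟩ (d i)) =
      reduceUpTo d m (β + tailExp d i hi) := by
  induction m, him using Nat.le_induction with
  | base =>
    rw [reduceUpTo, reduceUpTo, reduceUpTo_add, reduceUpTo_add, reduceAt_add_single hi hd,
      reduceAt_add]
    all_goals
      intro j hj
      simp only [tailExp_apply, Finsupp.single_apply, Fin.ext_iff]
      split_ifs <;> omega
  | succ m _ ih => rw [reduceUpTo, reduceUpTo, ih]

end ExponentReduction

section MoraLazard

variable {n : ℕ} (d : ℕ → ℕ) (R : Type*) [CommRing R]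

def moraLazardGens (hn : 2 ≤ n) : Set (MvPolynomial (Fin n) R) :=
  {f | ∃ i : ℕ, ∃ hi : i < n - 2,
      f = X (⟨i, by omega⟩ : Fin n) ^ d i -
        X ⟨i + 1, by omega⟩ * X ⟨n - 1, by omega⟩ ^ (d i - 1)} ∪
    {X ⟨n - 2, by omega⟩ ^ d (n - 2)}

def leadingPowers : Set (MvPolynomial (Fin n) R) :=
  {g | ∃ i : ℕ, ∃ hi : i < n - 1, g = X (⟨i, by omega⟩ : Fin n) ^ d i}

-- When all `d i ≥ 1`, after `reduceUpTo d (n - 2)` only the exponent of `x_{n-1}` can break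
-- `IsStandard`, and then the monomial is a multiple of the generator `x_{n-1}^{d_{n-1}}`.
open Classical in
noncomputable def normalForm (α : Fin n →₀ ℕ) : MvPolynomial (Fin n) R :=
  if IsStandard d (reduceUpTo d (n - 2) α) then monomial (reduceUpTo d (n - 2) α) 1 else 0

noncomputable def normalFormMap : MvPolynomial (Fin n) R →ₗ[R] MvPolynomial (Fin n) R :=
  (basisMonomials (Fin n) R).constr R (normalForm d R)

variable {d R}

lemma normalFormMap_monomial (α : Fin n →₀ ℕ) :
    normalFormMap d R (monomial α 1) = normalForm d R α := by
  rw [normalFormMap, show monomial α (1 : R) = basisMonomials (Fin n) R α by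
    rw [coe_basisMonomials], Module.Basis.constr_basis]

lemma normalForm_of_isStandard {α : Fin n →₀ ℕ} (hα : IsStandard d α) :
    normalForm d R α = monomial α 1 := by
  rw [normalForm, reduceUpTo_of_isStandard hα, if_pos hα]

lemma mem_support_normalForm {α β : Fin n →₀ ℕ} (hβ : β ∈ (normalForm d R α).support) :
    β = α ∨ DegRevLexLT β α := by
  rw [normalForm] at hβ
  split_ifs at hβ
  · rw [Finset.mem_singleton.mp (support_monomial_subset hβ)]
    exact reduceUpTo_le _ _
  · simp at hβ

lemma normalForm_add_single {i : ℕ} (hi : i < n - 2) (hd : 1 ≤ d i) (γ : Fin n →₀ ℕ) :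
    normalForm d R (γ + Finsupp.single ⟨i, by omega⟩ (d i)) =
      normalForm d R (γ + tailExp d i hi) := by
  rw [normalForm, normalForm, reduceUpTo_add_single hi hd hi]

lemma normalForm_add_single_last (hn : 2 ≤ n) (γ : Fin n →₀ ℕ) :
    normalForm d R (γ + Finsupp.single ⟨n - 2, by omega⟩ (d (n - 2))) = 0 := by
  have hδ : ∀ j : Fin n, (j : ℕ) < n - 2 →
      Finsupp.single (⟨n - 2, by omega⟩ : Fin n) (d (n - 2)) j = 0 := by
    intro j hj
    rw [Finsupp.single_apply, if_neg (by rw [Fin.ext_iff]; simp only; omega)]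
  rw [normalForm, reduceUpTo_add hδ, if_neg]
  intro hs
  have := hs ⟨n - 2, by omega⟩ (by simp only; omega)
  simp at this

lemma binomial_eq_monomial_sub_monomial {i : ℕ} (hi : i < n - 2) :
    (X (⟨i, by omega⟩ : Fin n) ^ d i - X ⟨i + 1, by omega⟩ * X ⟨n - 1, by omega⟩ ^ (d i - 1) :
        MvPolynomial (Fin n) R) =
      monomial (Finsupp.single ⟨i, by omega⟩ (d i)) 1 - monomial (tailExp d i hi) 1 := by
  rw [X_pow_eq_monomial, X_pow_eq_monomial, X, monomial_mul, one_mul, tailExp]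

lemma normalFormMap_eq_zero_of_mem (hn : 2 ≤ n) (hd : ∀ i, i < n - 1 → 1 ≤ d i)
    {f : MvPolynomial (Fin n) R} (hf : f ∈ Ideal.span (moraLazardGens d R hn)) :
    normalFormMap d R f = 0 := by
  refine map_eq_zero_of_mem_ideal_span _ ?_ hf
  rintro a (⟨i, hi, rfl⟩ | rfl) γ
  · rw [binomial_eq_monomial_sub_monomial hi, mul_sub, monomial_mul, monomial_mul, mul_one,
      map_sub, normalFormMap_monomial, normalFormMap_monomial,
      normalForm_add_single hi (hd i (by omega)), sub_self]
  · rw [X_pow_eq_monomial, monomial_mul, mul_one, normalFormMap_monomial,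
      normalForm_add_single_last hn]

lemma not_isStandard_of_isLeadExp (hn : 2 ≤ n) (hd : ∀ i, i < n - 1 → 1 ≤ d i)
    {f : MvPolynomial (Fin n) R} (hf : f ∈ Ideal.span (moraLazardGens d R hn))
    {e : Fin n →₀ ℕ} (he : IsLeadExp f e) : ¬ IsStandard d e := by
  intro hs
  have h := coeff_constr_of_isLeadExp (normalForm d R) (fun _ _ => mem_support_normalForm) he
  rw [← normalFormMap, normalFormMap_eq_zero_of_mem hn hd hf, normalForm_of_isStandard hs,
    coeff_monomial, if_pos rfl, mul_one, coeff_zero] at h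
  exact mem_support_iff.mp he.1 h.symm

lemma monomial_mem_span_leadingPowers {e : Fin n →₀ ℕ} (he : ¬ IsStandard d e) :
    monomial e 1 ∈ Ideal.span (leadingPowers d R) := by
  simp only [IsStandard, not_forall, not_lt] at he
  obtain ⟨j, hj, hde⟩ := he
  have hle : Finsupp.single j (d j) ≤ e := Finsupp.single_le_iff.mpr hde
  rw [← tsub_add_cancel_of_le hle, ← mul_one (1 : R), ← monomial_mul, ← X_pow_eq_monomial]
  exact Ideal.mul_mem_left _ _ (Ideal.subset_span ⟨j, hj, rfl⟩)

lemma isLeadExp_binomial [Nontrivial R] {i : ℕ} (hi : i < n - 2) (hd : 1 ≤ d i) :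
    IsLeadExp (X (⟨i, by omega⟩ : Fin n) ^ d i -
        X ⟨i + 1, by omega⟩ * X ⟨n - 1, by omega⟩ ^ (d i - 1) : MvPolynomial (Fin n) R)
      (Finsupp.single ⟨i, by omega⟩ (d i)) := by
  rw [binomial_eq_monomial_sub_monomial hi]
  exact isLeadExp_monomial_sub_monomial (tailExp_lt d hi hd)

lemma isLeadExp_X_pow [Nontrivial R] (j : Fin n) (m : ℕ) :
    IsLeadExp (X j ^ m : MvPolynomial (Fin n) R) (Finsupp.single j m) := by
  rw [X_pow_eq_monomial]
  exact isLeadExp_monomial one_ne_zero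

lemma leadMonomials_moraLazardGens [Nontrivial R] (hn : 2 ≤ n)
    (hd : ∀ i, i < n - 1 → 1 ≤ d i) :
    {m | ∃ f ∈ moraLazardGens d R hn, ∃ e, IsLeadExp f e ∧ m = monomial e (1 : R)} =
      leadingPowers d R := by
  ext g
  constructor
  · rintro ⟨f, ⟨i, hi, rfl⟩ | rfl, e, he, rfl⟩
    · rw [he.unique (isLeadExp_binomial hi (hd i (by omega)))]
      exact ⟨i, by omega, X_pow_eq_monomial.symm⟩
    · rw [he.unique (isLeadExp_X_pow _ _)]
      exact ⟨n - 2, by omega, X_pow_eq_monomial.symm⟩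
  · rintro ⟨i, hi, rfl⟩
    obtain hi' | rfl : i < n - 2 ∨ i = n - 2 := by omega
    · exact ⟨_, .inl ⟨i, hi', rfl⟩, _, isLeadExp_binomial hi' (hd i hi), X_pow_eq_monomial⟩
    · exact ⟨_, .inr rfl, _, isLeadExp_X_pow _ _, X_pow_eq_monomial⟩

lemma ltIdeal_span_moraLazardGens {k : Type*} [Field k] (hn : 2 ≤ n)
    (hd : ∀ i, i < n - 1 → 1 ≤ d i) :
    ltIdeal (Ideal.span (moraLazardGens d k hn)) = Ideal.span (leadingPowers d k) := by
  refine le_antisymm (Ideal.span_le.mpr ?_) ?_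
  · rintro _ ⟨f, hf, -, e, he, rfl⟩
    exact monomial_mem_span_leadingPowers (not_isStandard_of_isLeadExp hn hd hf he)
  · rw [← leadMonomials_moraLazardGens hn hd]
    exact span_leadMonomials_le_ltIdeal Ideal.subset_span

lemma isGroebnerBasis_moraLazardGens {k : Type*} [Field k] (hn : 2 ≤ n)
    (hd : ∀ i, i < n - 1 → 1 ≤ d i) :
    IsGroebnerBasis (moraLazardGens d k hn) (Ideal.span (moraLazardGens d k hn)) :=
  ⟨Ideal.subset_span, by
    rw [ltIdeal_span_moraLazardGens hn hd, leadMonomials_moraLazardGens hn hd]⟩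

end MoraLazard

/-- Let `I` be the ideal generated by
`A = {x_1^{d_1} - x_2 x_n^{d_1-1}, …, x_{n-2}^{d_{n-2}} - x_{n-1} x_n^{d_{n-2}-1}, x_{n-1}^{d_{n-1}}}`.
Then `A` is a Gröbner basis of `I` w.r.t. degrevlex with `x_n` smallest, and the leading
ideal of `I` is `⟨x_1^{d_1}, …, x_{n-1}^{d_{n-1}}⟩`.  (Variables are indexed `0, …, n-1`,
so `x_i` is `X (i-1)` and `d_i` is `d (i-1)`.) -/
theorem mora_lazard_groebner {k : Type*} [Field k] (n : ℕ) (hn : 3 ≤ n)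
    (d : ℕ → ℕ) (hd : ∀ i, i < n - 1 → 1 ≤ d i) :
    IsGroebnerBasis
      ({f : MvPolynomial (Fin n) k | ∃ i : ℕ, ∃ hi : i < n - 2,
          f = (X (⟨i, by omega⟩ : Fin n)) ^ d i -
            X (⟨i + 1, by omega⟩ : Fin n) * X (⟨n - 1, by omega⟩ : Fin n) ^ (d i - 1)} ∪
        {X (⟨n - 2, by omega⟩ : Fin n) ^ d (n - 2)})
      (Ideal.span
        ({f : MvPolynomial (Fin n) k | ∃ i : ℕ, ∃ hi : i < n - 2,
            f = (X (⟨i, by omega⟩ : Fin n)) ^ d i -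
              X (⟨i + 1, by omega⟩ : Fin n) * X (⟨n - 1, by omega⟩ : Fin n) ^ (d i - 1)} ∪
          {X (⟨n - 2, by omega⟩ : Fin n) ^ d (n - 2)})) ∧
    ltIdeal
        (Ideal.span
          ({f : MvPolynomial (Fin n) k | ∃ i : ℕ, ∃ hi : i < n - 2,
              f = (X (⟨i, by omega⟩ : Fin n)) ^ d i -
                X (⟨i + 1, by omega⟩ : Fin n) * X (⟨n - 1, by omega⟩ : Fin n) ^ (d i - 1)} ∪
            {X (⟨n - 2, by omega⟩ : Fin n) ^ d (n - 2)})) =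
      Ideal.span {g : MvPolynomial (Fin n) k | ∃ i : ℕ, ∃ hi : i < n - 1, g = (X (⟨i, by omega⟩ : Fin n)) ^ d i} := by
  have hn' : 2 ≤ n := by omega
  exact ⟨isGroebnerBasis_moraLazardGens hn' hd, ltIdeal_span_moraLazardGens hn' hd⟩
end

section
/- Let f = x^4 + x^3 y and g = x^3 + y^3 in k[x,y] over a field k of characteristic zero, and let I = ⟨f, g⟩. Then x + y belongs to the radical of I, (x+y)^4 does not belong to I, and (x+y)^5 belongs to I. In particular, the Noether exponent of I is at least 5. -/
open MvPolynomial

private noncomputable abbrev mm : Fin 2 →₀ ℕ := Finsupp.single 0 2 + Finsupp.single 1 2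

private lemma coeff22_I {k : Type*} [CommRing k] (u v : MvPolynomial (Fin 2) k) :
    coeff mm (u * (X 0 ^ 4 + X 0 ^ 3 * X 1) + v * (X 0 ^ 3 + X 1 ^ 3)) = 0 := by
  have h1 : ¬ (Finsupp.single (0 : Fin 2) 4 ≤ mm) := by
    intro h; simpa using Finsupp.le_def.mp h 0
  have h2 : ¬ (Finsupp.single (0 : Fin 2) 3 + Finsupp.single 1 1 ≤ mm) := by
    intro h; simpa using Finsupp.le_def.mp h 0
  have h3 : ¬ (Finsupp.single (0 : Fin 2) 3 ≤ mm) := by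
    intro h; simpa using Finsupp.le_def.mp h 0
  have h4 : ¬ (Finsupp.single (1 : Fin 2) 3 ≤ mm) := by
    intro h; simpa using Finsupp.le_def.mp h 1
  have e1 : (X 0 ^ 4 : MvPolynomial (Fin 2) k) = monomial (Finsupp.single 0 4) 1 :=
    X_pow_eq_monomial
  have e2 : (X 0 ^ 3 * X 1 : MvPolynomial (Fin 2) k)
      = monomial (Finsupp.single 0 3 + Finsupp.single 1 1) 1 := by
    rw [X_pow_eq_monomial, X, monomial_mul, mul_one]
  have e3 : (X 0 ^ 3 : MvPolynomial (Fin 2) k) = monomial (Finsupp.single 0 3) 1 :=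
    X_pow_eq_monomial
  have e4 : (X 1 ^ 3 : MvPolynomial (Fin 2) k) = monomial (Finsupp.single 1 3) 1 :=
    X_pow_eq_monomial
  rw [e1, e2, e3, e4]
  simp [mul_add, coeff_mul_monomial', h1, h2, h3, h4]

private lemma coeff22_pow4 {k : Type*} [CommRing k] :
    coeff mm ((X 0 + X 1 : MvPolynomial (Fin 2) k) ^ 4) = 6 := by
  have hexp : ((X 0 + X 1 : MvPolynomial (Fin 2) k)) ^ 4
      = X 0 ^ 4 + C 4 * (X 0 ^ 3 * X 1) + C 6 * (X 0 ^ 2 * X 1 ^ 2)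
        + C 4 * (X 0 * X 1 ^ 3) + X 1 ^ 4 := by
    have c4 : (C 4 : MvPolynomial (Fin 2) k) = 4 := map_ofNat C 4
    have c6 : (C 6 : MvPolynomial (Fin 2) k) = 6 := map_ofNat C 6
    rw [c4, c6]; ring
  have e1 : (X 0 ^ 4 : MvPolynomial (Fin 2) k) = monomial (Finsupp.single 0 4) 1 :=
    X_pow_eq_monomial
  have e2 : (X 0 ^ 3 * X 1 : MvPolynomial (Fin 2) k)
      = monomial (Finsupp.single 0 3 + Finsupp.single 1 1) 1 := by
    rw [X_pow_eq_monomial, X, monomial_mul, mul_one]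
  have e3 : (X 0 ^ 2 * X 1 ^ 2 : MvPolynomial (Fin 2) k)
      = monomial (Finsupp.single 0 2 + Finsupp.single 1 2) 1 := by
    rw [X_pow_eq_monomial, X_pow_eq_monomial, monomial_mul, mul_one]
  have e4 : (X 0 * X 1 ^ 3 : MvPolynomial (Fin 2) k)
      = monomial (Finsupp.single 0 1 + Finsupp.single 1 3) 1 := by
    rw [X_pow_eq_monomial, X, monomial_mul, mul_one]
  have e5 : (X 1 ^ 4 : MvPolynomial (Fin 2) k) = monomial (Finsupp.single 1 4) 1 :=
    X_pow_eq_monomial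
  have d1 : (Finsupp.single (0 : Fin 2) 4) ≠ mm := by
    intro h; simpa using DFunLike.congr_fun h 0
  have d2 : (Finsupp.single (0 : Fin 2) 3 + Finsupp.single 1 1) ≠ mm := by
    intro h; simpa using DFunLike.congr_fun h 0
  have d4 : (Finsupp.single (0 : Fin 2) 1 + Finsupp.single 1 3) ≠ mm := by
    intro h; simpa using DFunLike.congr_fun h 0
  have d5 : (Finsupp.single (1 : Fin 2) 4) ≠ mm := by
    intro h; simpa using DFunLike.congr_fun h 1
  rw [hexp, e1, e2, e3, e4, e5]
  simp [coeff_add, coeff_C_mul, coeff_monomial, d1, d2, d4, d5, mm]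

/-- For `f = x⁴ + x³y`, `g = x³ + y³` in `k[x,y]` (`k` of characteristic zero) and
`I = ⟨f, g⟩`: `x + y` belongs to the radical of `I`, `(x+y)⁴ ∉ I`, and `(x+y)⁵ ∈ I`.
In particular the Noether exponent of `I` is at least `5`. -/
theorem masser_example {k : Type*} [Field k] [CharZero k] :
    let x : MvPolynomial (Fin 2) k := X 0
    let y : MvPolynomial (Fin 2) k := X 1
    let I : Ideal (MvPolynomial (Fin 2) k) := Ideal.span {x ^ 4 + x ^ 3 * y, x ^ 3 + y ^ 3}
    (x + y) ∈ I.radical ∧ (x + y) ^ 4 ∉ I ∧ (x + y) ^ 5 ∈ I ∧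
      ∀ e : ℕ, (∀ f ∈ I.radical, f ^ e ∈ I) → 5 ≤ e := by
  intro x y I
  have h5 : (x + y) ^ 5 ∈ I :=
    Ideal.mem_span_pair.mpr
      ⟨9 * (y - x), 10 * x ^ 2 + 5 * (x * y) + y ^ 2, by show _ = (X 0 + X 1) ^ 5; ring⟩
  have hrad : (x + y) ∈ I.radical := ⟨5, h5⟩
  have h4 : (x + y) ^ 4 ∉ I := by
    intro hmem
    obtain ⟨u, v, huv⟩ := Ideal.mem_span_pair.mp hmem
    have hz := coeff22_I (k := k) u v
    rw [huv] at hz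
    rw [coeff22_pow4] at hz
    exact absurd hz (by norm_num)
  refine ⟨hrad, h4, h5, ?_⟩
  intro e he
  by_contra hlt
  push_neg at hlt
  have hxe : (x + y) ^ e ∈ I := he _ hrad
  have : (x + y) ^ 4 ∈ I := by
    have : (x + y) ^ 4 = (x + y) ^ e * (x + y) ^ (4 - e) := by
      rw [← pow_add]; congr 1; omega
    rw [this]
    exact I.mul_mem_right _ hxe
  exact h4 this
end

section
/- Let H be a finite set of monomials m_1, ..., m_s in k[x_1,...,x_n] generating a quasi-stable ideal with Pommaret basis {m_1,...,m_s}, dimension D of the quotient, c_i = deg(m_i) and n_i the number of non-multiplicative variables of m_i. If the Hilbert series of the ideal equals (1 - Σ_i (1-t)^{n_i} t^{c_i})/(1-t)^n = N(t)/(1-t)^D, then deg(N) ≤ max_i (c_i + n_i) - n + D. -/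
open Polynomial

/-- Let `{m_1,…,m_s}` be the Pommaret basis of a quasi-stable monomial ideal in
`k[x_1,…,x_n]`, `D` the dimension of the quotient, `c_i = deg m_i` and `n_i` the number of
non-multiplicative variables of `m_i`.  If the Hilbert series equals
`(1 - Σ_i (1-t)^{n_i} t^{c_i})/(1-t)^n = N(t)/(1-t)^D` with `N(1) ≠ 0` — equivalently,
`N(t)·(1-t)^{n-D} = 1 - Σ_i (1-t)^{n_i} t^{c_i}` — then
`deg N ≤ max_i (c_i + n_i) - n + D`. -/
theorem numerator_degree_bound (n D s : ℕ) (hD : D ≤ n)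
    (c ni : Fin s → ℕ) (N : Polynomial ℚ) (hN1 : N.eval 1 ≠ 0)
    (heq : N * (1 - Polynomial.X) ^ (n - D) =
      1 - ∑ i, (1 - Polynomial.X) ^ (ni i) * Polynomial.X ^ (c i)) :
    (N.natDegree : ℤ) ≤
      ((Finset.univ.sup fun i : Fin s => c i + ni i : ℕ) : ℤ) - n + D := by
  have hX : (1 - X : Polynomial ℚ) ≠ 0 := by
    intro h
    have := congrArg (Polynomial.eval 0) h
    simp at this
  have hXdeg : (1 - X : Polynomial ℚ).natDegree = 1 := by
    have : (1 - X : Polynomial ℚ) = -(X - C 1) := by rw [Polynomial.C_1]; ring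
    rw [this, natDegree_neg, natDegree_X_sub_C]
  have hNne : N ≠ 0 := fun h => hN1 (by simp [h])
  have hdeg : N.natDegree + (n - D) =
      (1 - ∑ i, (1 - X : Polynomial ℚ) ^ (ni i) * X ^ (c i)).natDegree := by
    rw [← heq, natDegree_mul hNne (pow_ne_zero _ hX), natDegree_pow, hXdeg, mul_one]
  set M := (Finset.univ.sup fun i : Fin s => c i + ni i : ℕ) with hM
  have hbound : (1 - ∑ i, (1 - X : Polynomial ℚ) ^ (ni i) * X ^ (c i)).natDegree ≤ M := by
    refine (natDegree_sub_le _ _).trans (max_le (by simp) ?_)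
    refine natDegree_sum_le_of_forall_le _ _ (fun i _ => ?_)
    refine (natDegree_mul_le).trans ?_
    have h1 : ((1 - X : Polynomial ℚ) ^ (ni i)).natDegree ≤ ni i := by
      rw [natDegree_pow, hXdeg, mul_one]
    have h2 : ((X : Polynomial ℚ) ^ (c i)).natDegree ≤ c i := by
      simp [natDegree_X_pow]
    have : ni i + c i ≤ M := by
      rw [hM]
      have h3 : c i + ni i ≤ Finset.univ.sup fun i : Fin s => c i + ni i :=
        by simpa using Finset.le_sup (f := fun i : Fin s => c i + ni i) (Finset.mem_univ i)
      omega
    omega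
  have hfin : N.natDegree + (n - D) ≤ M := hdeg ▸ hbound
  have : (N.natDegree : ℤ) + ((n : ℤ) - D) ≤ M := by
    have := Nat.cast_le (α := ℤ) |>.mpr hfin
    push_cast [Nat.cast_sub hD] at this
    linarith
  linarith
end

section
/- Let Q be a p-primary ideal of length ℓ (there is a maximal chain Q = Q_1 ⊂ ··· ⊂ Q_ℓ = p of primary ideals), and let r be the least positive integer a with p^a ⊆ Q. Then r ≤ ℓ. -/
/-!
If `p ^ ℓ ⊄ Q`, pass to the local ring `(P_p, 𝔪)`, where `Q P_p` is `𝔪`-primary and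
`𝔪 ^ ℓ ⊄ Q P_p`. By Nakayama, `Q P_p + 𝔪 ^ (k + 1) ⊊ Q P_p + 𝔪 ^ k` as long as
`𝔪 ^ k ⊄ Q P_p`, so
`Q P_p ⊊ Q P_p + 𝔪 ^ ℓ ⊊ ⋯ ⊊ Q P_p + 𝔪 = 𝔪`
is a chain of `ℓ + 1` ideals with radical `𝔪`, hence `𝔪`-primary. Its contraction to `P` is a
chain of `ℓ + 1` `p`-primary ideals from `Q` to `p`, contradicting maximality of `ℓ`.
-/

open IsLocalRing

namespace Ideal

theorem radical_sup_pow_eq {R : Type*} [CommRing R] {I p : Ideal R} [p.IsPrime]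
    (hI : I.radical = p) {k : ℕ} (hk : k ≠ 0) : (I ⊔ p ^ k).radical = p := by
  refine le_antisymm ?_ (hI ▸ radical_mono le_sup_left)
  calc (I ⊔ p ^ k).radical ≤ p.radical :=
        radical_mono (sup_le (hI ▸ le_radical) (pow_le_self hk))
    _ = p := IsPrime.radical ‹_›

end Ideal

namespace IsLocalRing

variable {R : Type*} [CommRing R] [IsLocalRing R]

theorem sup_maximalIdeal_pow_succ_lt [IsNoetherianRing R] {I : Ideal R} {k : ℕ}
    (hk : ¬ maximalIdeal R ^ k ≤ I) :
    I ⊔ maximalIdeal R ^ (k + 1) < I ⊔ maximalIdeal R ^ k := by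
  refine (sup_le_sup_left (Ideal.pow_le_pow_right k.le_succ) I).lt_of_ne fun h ↦ hk ?_
  refine Submodule.le_of_le_smul_of_le_jacobson_bot (IsNoetherian.noetherian _)
    (maximalIdeal_le_jacobson ⊥) ?_
  rw [Ideal.smul_eq_mul, ← pow_succ', h]
  exact le_sup_right

theorem strictAntiOn_sup_maximalIdeal_pow [IsNoetherianRing R] {I : Ideal R} {n : ℕ}
    (hn : ¬ maximalIdeal R ^ n ≤ I) :
    StrictAntiOn (fun k ↦ I ⊔ maximalIdeal R ^ k) (Set.Iic n) :=
  strictAntiOn_Iic_of_succ_lt fun _ hk ↦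
    sup_maximalIdeal_pow_succ_lt fun h ↦ hn ((Ideal.pow_le_pow_right hk.le).trans h)

theorem exists_strictMono_radical_eq_maximalIdeal [IsNoetherianRing R] {I : Ideal R}
    (hI : I.radical = maximalIdeal R) {n : ℕ} (hn : ¬ maximalIdeal R ^ (n + 1) ≤ I) :
    ∃ c : Fin (n + 2) → Ideal R, StrictMono c ∧ c 0 = I ∧
      c (Fin.last _) = maximalIdeal R ∧ ∀ i, (c i).radical = maximalIdeal R := by
  refine ⟨Fin.cons I fun i : Fin (n + 1) ↦ I ⊔ maximalIdeal R ^ (n + 1 - i), ?_, rfl, ?_, ?_⟩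
  · refine Fin.strictMono_cons.2 ⟨fun i ↦ left_lt_sup.2 fun h ↦ hn ?_, fun i j hij ↦ ?_⟩
    · exact (Ideal.pow_le_pow_right (Nat.sub_le _ _)).trans h
    · have hj : (j : ℕ) < n + 1 := j.2
      exact strictAntiOn_sup_maximalIdeal_pow hn (by simp) (by simp) (by omega)
  · rw [← Fin.succ_last, Fin.cons_succ, Fin.val_last, Nat.add_sub_cancel_left, pow_one]
    exact sup_eq_right.2 (hI ▸ Ideal.le_radical)
  · refine Fin.cases hI fun i ↦ ?_
    simpa using Ideal.radical_sup_pow_eq hI (by omega)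

end IsLocalRing

theorem Ideal.IsPrimary.exists_strictMono_of_not_pow_le {R : Type*} [CommRing R]
    [IsNoetherianRing R] {p Q : Ideal R} [p.IsPrime] (hQ : Q.IsPrimary) (hrad : Q.radical = p)
    {n : ℕ} (hpow : ¬ p ^ (n + 1) ≤ Q) :
    ∃ c : Fin (n + 2) → Ideal R, StrictMono c ∧ c 0 = Q ∧ c (Fin.last _) = p ∧
      ∀ i, (c i).IsPrimary ∧ (c i).radical = p := by
  let S := Localization.AtPrime p
  have hQS : (Q.map (algebraMap R S)).under R = Q :=
    IsLocalization.under_map_of_isPrimary_disjoint p.primeCompl S hQ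
      (Set.disjoint_compl_left_iff_subset.2 (hrad ▸ Ideal.le_radical))
  have hradS : (Q.map (algebraMap R S)).radical = maximalIdeal S := by
    rw [← IsLocalization.map_radical p.primeCompl, hrad, Localization.AtPrime.map_eq_maximalIdeal]
  have hpS : (maximalIdeal S).under R = p := Localization.AtPrime.under_maximalIdeal
  have hpowS : ¬ maximalIdeal S ^ (n + 1) ≤ Q.map (algebraMap R S) := fun h ↦ by
    rw [← Localization.AtPrime.map_eq_maximalIdeal, ← Ideal.map_pow] at h
    exact hpow ((Ideal.map_le_iff_le_comap.1 h).trans hQS.le)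
  obtain ⟨c, hc, hc0, hcl, hcrad⟩ := exists_strictMono_radical_eq_maximalIdeal hradS hpowS
  refine ⟨fun i ↦ (c i).under R, (IsLocalization.orderEmbedding p.primeCompl S).strictMono.comp hc,
    by simp only [hc0, hQS], by simp only [hcl, hpS], fun i ↦ ⟨?_, ?_⟩⟩
  · exact (Ideal.isPrimary_of_isMaximal_radical (hcrad i ▸ maximalIdeal.isMaximal S)).comap _
  · rw [← Ideal.comap_radical, hcrad i]
    exact hpS

/-- Let `Q` be a `p`-primary ideal of length `ℓ` in a Noetherian commutative ring: there is
a chain `Q = Q_1 ⊂ ⋯ ⊂ Q_ℓ = p` of `p`-primary ideals and no longer such chain.  If `r` is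
the least positive integer `a` with `p^a ⊆ Q`, then `r ≤ ℓ`. -/
theorem primary_power_le_length {P : Type*} [CommRing P] [IsNoetherianRing P]
    (p Q : Ideal P) (hQ : Q.IsPrimary) (hrad : Q.radical = p)
    (ℓ : ℕ) (hℓ : 0 < ℓ)
    (hmax : ¬ ∃ c : Fin (ℓ + 1) → Ideal P, StrictMono c ∧
      c ⟨0, by omega⟩ = Q ∧ c ⟨ℓ, by omega⟩ = p ∧
      ∀ i, (c i).IsPrimary ∧ (c i).radical = p) :
    sInf {a : ℕ | 0 < a ∧ p ^ a ≤ Q} ≤ ℓ := by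
  refine Nat.sInf_le ⟨hℓ, not_not.1 fun hpow ↦ hmax ?_⟩
  have : p.IsPrime := hrad ▸ Ideal.isPrime_radical hQ
  obtain ⟨n, rfl⟩ := Nat.exists_eq_add_one_of_ne_zero hℓ.ne'
  exact hQ.exists_strictMono_of_not_pow_le hrad hpow
end

section
/- Let I ⊂ k[x,y] be the ideal ⟨x+y⟩ ∩ ⟨x^3, y^3⟩. For every f in the radical of I, one has f^5 ∈ I; that is, the Noether exponent of I is at most 5. -/
/-!
The line `x + y = 0` is a component of `V(I)` and `⟨x + y⟩` is prime, so any `f ∈ √I` is a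
multiple `(x + y) g`. Then `f⁵ = (x + y)⁵ g⁵`, and `(x + y)⁵ ∈ ⟨x³, y³⟩` because every
monomial of degree `5` in `x, y` is divisible by `x³` or `y³`.
-/

open MvPolynomial

theorem MvPolynomial.prime_X_zero_add_X_one {R : Type*} [CommRing R] [IsDomain R] :
    Prime (X 0 + X 1 : MvPolynomial (Fin 2) R) := by
  rw [← MulEquiv.prime_iff (finSuccEquiv R 1), map_add, finSuccEquiv_X_zero,
    show (X 1 : MvPolynomial (Fin 2) R) = X (Fin.succ 0) from rfl, finSuccEquiv_X_succ,
    ← sub_neg_eq_add, ← map_neg]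
  exact Polynomial.prime_X_sub_C _

theorem Ideal.pow_mem_span_singleton_inf_of_mem_radical {R : Type*} [CommRing R] {p : R}
    (hp : Prime p) {J : Ideal R} {n : ℕ} (hn : 0 < n) (hpJ : p ^ n ∈ J) {f : R}
    (hf : f ∈ (span {p} ⊓ J).radical) : f ^ n ∈ span {p} ⊓ J := by
  have hfp : f ∈ span {p} := by
    simpa [(isPrime_span_singleton_of_prime hp).radical] using radical_mono inf_le_left hf
  obtain ⟨g, rfl⟩ := mem_span_singleton.mp hfp
  exact ⟨pow_mem_of_mem _ hfp n hn, mul_pow p g n ▸ J.mul_mem_right _ hpJ⟩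

theorem noether_exponent_le_five_general {k : Type*} [Field k] :
    let x : MvPolynomial (Fin 2) k := X 0
    let y : MvPolynomial (Fin 2) k := X 1
    let I : Ideal (MvPolynomial (Fin 2) k) :=
      Ideal.span {x + y} ⊓ Ideal.span {x ^ 3, y ^ 3}
    ∀ f ∈ I.radical, f ^ 5 ∈ I := by
  intro x y I f hf
  have hxy : (x + y) ^ 5 ∈ Ideal.span {x ^ 3, y ^ 3} :=
    Ideal.add_pow_mem_of_pow_mem_of_le (m := 3) (n := 3) _ (Ideal.subset_span (by simp))
      (Ideal.subset_span (by simp)) (by norm_num)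
  exact Ideal.pow_mem_span_singleton_inf_of_mem_radical prime_X_zero_add_X_one (by norm_num)
    hxy hf

/-- For `I = ⟨x+y⟩ ∩ ⟨x³, y³⟩ ⊆ k[x,y]` (`k` of characteristic zero), every `f` in the
radical of `I` satisfies `f⁵ ∈ I`; i.e. the Noether exponent of `I` is at most `5`. -/
theorem noether_exponent_le_five {k : Type*} [Field k] [CharZero k] :
    let x : MvPolynomial (Fin 2) k := X 0
    let y : MvPolynomial (Fin 2) k := X 1
    let I : Ideal (MvPolynomial (Fin 2) k) :=
      Ideal.span {x + y} ⊓ Ideal.span {x ^ 3, y ^ 3}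
    ∀ f ∈ I.radical, f ^ 5 ∈ I :=
  noether_exponent_le_five_general
end
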